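/- arXiv:2110.04646 — 9 statements merged into one kernel-verified Lean document; each statement's English description precedes it below -/
import Mathlib

section
/- Let G be a torsion-free abelian group and let I be an index set with at least two elements. If the direct sum ⨁_{i∈I} G of copies of G is Krylov transitive, then G is fully transitive. -/
/-- `n` divides `x` in the group `G`. -/
def Divides {G : Type*} [AddCommGroup G] (n : ℕ) (x : G) : Prop :=
  ∃ z : G, n • z = x

/-- `χ(x) ≤ χ(y)`: every prime-power dividing `x` divides `y`. -/
def HeightLE {G H : Type*} [AddCommGroup G] [AddCommGroup H] (x : G) (y : H) : Prop :=
  ∀ p k : ℕ, p.Prime → Divides (p ^ k) x → Divides (p ^ k) y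

/-- `χ(x) = χ(y)`. -/
def HeightEq {G H : Type*} [AddCommGroup G] [AddCommGroup H] (x : G) (y : H) : Prop :=
  HeightLE x y ∧ HeightLE y x

def FullyTransitive (G : Type*) [AddCommGroup G] : Prop :=
  ∀ x y : G, HeightLE x y → ∃ φ : G →+ G, φ x = y

def KrylovTransitive (G : Type*) [AddCommGroup G] : Prop :=
  ∀ x y : G, HeightEq x y → ∃ φ : G →+ G, φ x = y

def TransitiveGrp (G : Type*) [AddCommGroup G] : Prop :=
  ∀ x y : G, HeightEq x y → ∃ φ : G ≃+ G, φ x = y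

def WeaklyTransitive (G : Type*) [AddCommGroup G] : Prop :=
  ∀ (x y : G) (φ ψ : G →+ G), φ x = y → ψ y = x → ∃ η : G ≃+ G, η x = y

def IsTorsionFreeGrp (G : Type*) [AddCommGroup G] : Prop :=
  ∀ (n : ℤ) (x : G), n ≠ 0 → n • x = 0 → x = 0

/-- `τ(x) ≤ τ(y)`. -/
def TypeLE {G H : Type*} [AddCommGroup G] [AddCommGroup H] (x : G) (y : H) : Prop :=
  ∃ n : ℤ, n ≠ 0 ∧ HeightLE x (n • y)

/-- `τ(x) = τ(y)`. -/
def TypeEq {G H : Type*} [AddCommGroup G] [AddCommGroup H] (x : G) (y : H) : Prop :=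
  TypeLE x y ∧ TypeLE y x

def Homogeneous (G : Type*) [AddCommGroup G] : Prop :=
  ∀ x y : G, x ≠ 0 → y ≠ 0 → TypeEq x y

/-- `π(G)`: primes `p` with `pG ≠ G`. -/
def piSet (G : Type*) [AddCommGroup G] : Set ℕ :=
  {p | p.Prime ∧ ¬ ∀ x : G, ∃ z : G, p • z = x}

theorem stmt_0 (G : Type*) [AddCommGroup G] (hTF : IsTorsionFreeGrp G)
    (I : Type*) (hI : ∃ i j : I, i ≠ j)
    (h : KrylovTransitive (I →₀ G)) : FullyTransitive G := by
  obtain ⟨i, j, hij⟩ := hI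
  intro x y hxy
  have hEq : HeightEq (Finsupp.single i x : I →₀ G)
      (Finsupp.single i x + Finsupp.single j y) := by
    constructor
    · rintro p k hp ⟨z, hz⟩
      have hx : Divides (p ^ k) x := by
        refine ⟨z i, ?_⟩
        have := congrFun (congrArg DFunLike.coe hz) i
        simpa using this
      obtain ⟨u, hu⟩ := hx
      obtain ⟨v, hv⟩ := hxy p k hp ⟨u, hu⟩
      refine ⟨Finsupp.single i u + Finsupp.single j v, ?_⟩
      rw [smul_add, Finsupp.smul_single, Finsupp.smul_single, hu, hv]
    · rintro p k hp ⟨z, hz⟩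
      have hx : Divides (p ^ k) x := by
        refine ⟨z i, ?_⟩
        have := congrFun (congrArg DFunLike.coe hz) i
        simpa [Finsupp.single_apply, hij, (Ne.symm hij)] using this
      obtain ⟨u, hu⟩ := hx
      exact ⟨Finsupp.single i u, by rw [Finsupp.smul_single, hu]⟩
  obtain ⟨φ, hφ⟩ := h _ _ hEq
  refine ⟨(Finsupp.applyAddHom j).comp (φ.comp (Finsupp.singleAddHom i)), ?_⟩
  simp only [AddMonoidHom.comp_apply, Finsupp.singleAddHom_apply, hφ,
    Finsupp.applyAddHom_apply, Finsupp.add_apply, Finsupp.single_apply]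
  simp [hij]
end

section
/- Let A and B be torsion-free abelian groups such that G = A × B is fully transitive. Suppose x = (a, b) and y = (a₁, b₁) are elements of G such that χ(a) ≤ χ(b₁ − b) (heights of a computed in A and of b₁ − b computed in B) and χ(b₁) ≤ χ(a₁ − a) (heights of b₁ computed in B and of a₁ − a computed in A). Then there exists an automorphism φ of G with φ(x) = y. -/
/-! The two shears `(a, b) ↦ (a, b + t a)` and `(a, b) ↦ (a + s b, b)` are automorphisms of
`A × B`. Full transitivity of `A × B` yields homomorphisms `t : A → B` with `t a = b₁ - b` and
`s : B → A` with `s b₁ = a₁ - a`, since heights of a summand's elements are the same in the summand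
and in `A × B`. The first shear sends `(a, b)` to `(a, b₁)`, the second sends that to `(a₁, b₁)`. -/

section Height

variable {G H K : Type*} [AddCommGroup G] [AddCommGroup H] [AddCommGroup K]

theorem HeightLE.trans {x : G} {y : H} {z : K} (hxy : HeightLE x y) (hyz : HeightLE y z) :
    HeightLE x z :=
  fun p k hp hx => hyz p k hp (hxy p k hp hx)

theorem heightLE_map (f : G →+ H) (x : G) : HeightLE x (f x) := by
  rintro p k - ⟨z, rfl⟩
  exact ⟨f z, (map_nsmul f _ z).symm⟩

theorem heightLE_of_leftInverse {i : G →+ H} {r : H →+ G} (hri : Function.LeftInverse r i) (x : G) :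
    HeightLE (i x) x := by
  simpa only [hri x] using heightLE_map r (i x)

theorem FullyTransitive.exists_hom_of_retracts (hK : FullyTransitive K)
    {i : G →+ K} {r : K →+ G} (hri : Function.LeftInverse r i)
    {j : H →+ K} {s : K →+ H} (hsj : Function.LeftInverse s j)
    {x : G} {y : H} (hxy : HeightLE x y) : ∃ t : G →+ H, t x = y := by
  obtain ⟨f, hf⟩ := hK (i x) (j y)
    (((heightLE_of_leftInverse hri x).trans hxy).trans (heightLE_map j y))
  exact ⟨s.comp (f.comp i), by simp [hf, hsj.eq]⟩

end Height

section Shear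

variable {A B : Type*} [AddCommGroup A] [AddCommGroup B]

def shearSnd (t : A →+ B) : (A × B) ≃+ (A × B) where
  toFun x := (x.1, x.2 + t x.1)
  invFun x := (x.1, x.2 - t x.1)
  left_inv x := by simp
  right_inv x := by simp
  map_add' x y := by simp only [Prod.fst_add, Prod.snd_add, map_add, Prod.mk_add_mk]; abel_nf

def shearFst (t : B →+ A) : (A × B) ≃+ (A × B) where
  toFun x := (x.1 + t x.2, x.2)
  invFun x := (x.1 - t x.2, x.2)
  left_inv x := by simp
  right_inv x := by simp
  map_add' x y := by simp only [Prod.fst_add, Prod.snd_add, map_add, Prod.mk_add_mk]; abel_nf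

@[simp]
theorem shearSnd_apply (t : A →+ B) (x : A × B) : shearSnd t x = (x.1, x.2 + t x.1) := rfl

@[simp]
theorem shearFst_apply (t : B →+ A) (x : A × B) : shearFst t x = (x.1 + t x.2, x.2) := rfl

end Shear

theorem stmt_1_general (A B : Type*) [AddCommGroup A] [AddCommGroup B]
    (hG : FullyTransitive (A × B))
    (a a₁ : A) (b b₁ : B)
    (h1 : HeightLE a (b₁ - b)) (h2 : HeightLE b₁ (a₁ - a)) :
    ∃ φ : (A × B) ≃+ (A × B), φ (a, b) = (a₁, b₁) := by
  obtain ⟨t, ht⟩ := hG.exists_hom_of_retracts (i := AddMonoidHom.inl A B)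
    (r := AddMonoidHom.fst A B) (fun _ => rfl) (j := AddMonoidHom.inr A B)
    (s := AddMonoidHom.snd A B) (fun _ => rfl) h1
  obtain ⟨s, hs⟩ := hG.exists_hom_of_retracts (i := AddMonoidHom.inr A B)
    (r := AddMonoidHom.snd A B) (fun _ => rfl) (j := AddMonoidHom.inl A B)
    (s := AddMonoidHom.fst A B) (fun _ => rfl) h2
  refine ⟨(shearSnd t).trans (shearFst s), ?_⟩
  simp [ht, hs]

theorem stmt_1 (A B : Type*) [AddCommGroup A] [AddCommGroup B]
    (hA : IsTorsionFreeGrp A) (hB : IsTorsionFreeGrp B)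
    (hG : FullyTransitive (A × B))
    (a a₁ : A) (b b₁ : B)
    (h1 : HeightLE a (b₁ - b)) (h2 : HeightLE b₁ (a₁ - a)) :
    ∃ φ : (A × B) ≃+ (A × B), φ (a, b) = (a₁, b₁) :=
  stmt_1_general A B hG a a₁ b b₁ h1 h2
end

section
/- Let G be a homogeneous torsion-free transitive abelian group. Then for every nonempty index set I, the direct sum ⨁_{i∈I} G of copies of G is transitive. -/
/-!
Every pair `(a, c)` in `G × G` can be moved to some `(b, 0)` by an automorphism. For each prime
`p` let `δ_p = h_p(a) ∸ h_p(c)` and `ε_p = h_p(c) ∸ h_p(a)`; as `a` and `c` have the same type,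
these vanish for almost all `p`, so (by torsion-freeness) `a = D • u` and `c = E • w` with
`D = ∏ p ^ δ_p` and `E = ∏ p ^ ε_p` coprime and `χ(u) = χ(w) = min (χ(a), χ(c))`. Transitivity
gives `α` with `α w = u`, so `(a, α c) = (D • u, E • u)`, which a matrix in `SL₂(ℤ)` sends to
`(u, 0)`. Applying this to pairs of coordinates moves every element of `⨁ G` into a single
coordinate, where transitivity of `G` finishes the proof.
-/
section

variable {G : Type*} [AddCommGroup G]

lemma IsTorsionFreeGrp.nsmul_right_injective (hTF : IsTorsionFreeGrp G) {n : ℕ} (hn : n ≠ 0) :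
    Function.Injective (n • · : G → G) := fun x y hxy =>
  sub_eq_zero.mp <| hTF n (x - y) (by exact_mod_cast hn) <| by
    rw [smul_sub, natCast_zsmul, natCast_zsmul, sub_eq_zero]; exact hxy

namespace Divides

lemma of_dvd {m n : ℕ} {x : G} (h : Divides n x) (hmn : m ∣ n) : Divides m x := by
  obtain ⟨z, rfl⟩ := h
  obtain ⟨k, rfl⟩ := hmn
  exact ⟨k • z, by rw [← mul_smul]⟩

lemma pow_of_le {p j k : ℕ} {x : G} (h : Divides (p ^ k) x) (hjk : j ≤ k) : Divides (p ^ j) x :=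
  h.of_dvd (pow_dvd_pow p hjk)

lemma mul_nsmul {n : ℕ} {x : G} (h : Divides n x) (m : ℕ) : Divides (m * n) (m • x) := by
  obtain ⟨z, rfl⟩ := h
  exact ⟨z, mul_smul m n z⟩

lemma of_nsmul_of_coprime {m n : ℕ} {x : G} (hmn : m.Coprime n) (h : Divides n (m • x)) :
    Divides n x := by
  obtain ⟨z, hz⟩ := h
  obtain ⟨a, b, hab⟩ := Nat.isCoprime_iff_coprime.mpr hmn
  refine ⟨(a • z + b • x : G), ?_⟩
  have hz' : (n : ℤ) • z = (m : ℤ) • x := by simpa only [natCast_zsmul] using hz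
  rw [← natCast_zsmul]
  linear_combination (norm := module) a • hz' + hab • x

lemma mul_of_coprime {m n : ℕ} {x : G} (hmn : m.Coprime n) (hm : Divides m x)
    (hn : Divides n x) : Divides (m * n) x := by
  obtain ⟨y, hy⟩ := hm
  obtain ⟨z, hz⟩ := hn
  obtain ⟨a, b, hab⟩ := Nat.isCoprime_iff_coprime.mpr hmn
  refine ⟨(a • z + b • y : G), ?_⟩
  have hy' : (m : ℤ) • y = x := by simpa only [natCast_zsmul] using hy
  have hz' : (n : ℤ) • z = x := by simpa only [natCast_zsmul] using hz
  rw [← natCast_zsmul]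
  push_cast
  linear_combination (norm := module) (a * m) • hz' + (b * n) • hy' + hab • x

lemma of_forall_prime_pow {n : ℕ} {x : G} (hn : n ≠ 0)
    (h : ∀ p k : ℕ, p.Prime → p ^ k ∣ n → Divides (p ^ k) x) : Divides n x := by
  induction n using Nat.recOnPosPrimePosCoprime with
  | prime_pow p k hp _ => exact h p k hp dvd_rfl
  | zero => exact absurd rfl hn
  | one => exact ⟨x, one_smul ℕ x⟩
  | coprime a b _ _ hab iha ihb =>
    exact mul_of_coprime hab
      (iha (left_ne_zero_of_mul hn) fun p k hp hk => h p k hp (hk.mul_right b))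
      (ihb (right_ne_zero_of_mul hn) fun p k hp hk => h p k hp (hk.mul_left a))

lemma of_pow_factorization_add_nsmul (hTF : IsTorsionFreeGrp G) {p m k : ℕ} {x : G}
    (hp : p.Prime) (hm : m ≠ 0) (h : Divides (p ^ (m.factorization p + k)) (m • x)) :
    Divides (p ^ k) x := by
  obtain ⟨z, hz⟩ := h
  have ht : ¬ p ∣ m / p ^ m.factorization p := Nat.not_dvd_ordCompl hp hm
  conv_rhs at hz => rw [← Nat.ordProj_mul_ordCompl_eq_self m p]
  rw [pow_add, mul_smul, mul_smul] at hz
  exact of_nsmul_of_coprime ((hp.coprime_iff_not_dvd.mpr ht).symm.pow_right k)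
    ⟨z, hTF.nsmul_right_injective (pow_ne_zero _ hp.ne_zero) hz⟩

lemma neg_iff {n : ℕ} {x : G} : Divides n (-x) ↔ Divides n x :=
  ⟨fun ⟨z, hz⟩ => ⟨-z, by rw [smul_neg, hz, neg_neg]⟩, fun ⟨z, hz⟩ => ⟨-z, by rw [smul_neg, hz]⟩⟩

lemma addEquiv_iff {H : Type*} [AddCommGroup H] (e : G ≃+ H) {n : ℕ} {x : G} :
    Divides n (e x) ↔ Divides n x :=
  ⟨fun ⟨z, hz⟩ => ⟨e.symm z, by rw [← map_nsmul, hz, e.symm_apply_apply]⟩,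
    fun ⟨z, hz⟩ => ⟨e z, by rw [← map_nsmul, hz]⟩⟩

lemma single_iff {I : Type*} {i : I} {n : ℕ} {x : G} :
    Divides n (Finsupp.single i x) ↔ Divides n x :=
  ⟨fun ⟨z, hz⟩ => ⟨z i, by simpa using congr($hz i)⟩,
    fun ⟨z, hz⟩ => ⟨Finsupp.single i z, by rw [Finsupp.smul_single, hz]⟩⟩

end Divides

/-- `PHeightLEAdd p d a c` says `h_p(a) ≤ h_p(c) + d` for the `p`-heights `h_p` (in `ℕ ∪ {∞}`). -/
def PHeightLEAdd (p d : ℕ) (a c : G) : Prop :=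
  ∀ j, Divides (p ^ (j + d)) a → Divides (p ^ j) c

/-- The excess `h_p(a) ∸ h_p(c)`; it is `0` (as `sInf ∅ = 0`) if `h_p(a) = ∞ > h_p(c)`. -/
noncomputable def heightExcess (p : ℕ) (a c : G) : ℕ :=
  sInf {d | PHeightLEAdd p d a c}

section heightExcess

variable {p d j k : ℕ} {a c : G}

lemma pHeightLEAdd_factorization_of_heightLE_nsmul (hTF : IsTorsionFreeGrp G) {n : ℕ}
    (hp : p.Prime) (hn : n ≠ 0) (h : HeightLE a (n • c)) :
    PHeightLEAdd p (n.factorization p) a c := fun j hj =>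
  Divides.of_pow_factorization_add_nsmul hTF hp hn (h p _ hp (by rwa [add_comm] at hj))

lemma heightExcess_le (h : PHeightLEAdd p d a c) : heightExcess p a c ≤ d :=
  Nat.sInf_le h

lemma pHeightLEAdd_heightExcess (h : PHeightLEAdd p d a c) :
    PHeightLEAdd p (heightExcess p a c) a c :=
  Nat.sInf_mem (s := {d | PHeightLEAdd p d a c}) ⟨d, h⟩

lemma exists_divides_not_divides_of_heightExcess_pos (h : 0 < heightExcess p a c) :
    ∃ j, 0 < j ∧ Divides (p ^ (j + (heightExcess p a c - 1))) a ∧ ¬ Divides (p ^ j) c := by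
  have : ¬ PHeightLEAdd p (heightExcess p a c - 1) a c :=
    Nat.notMem_of_lt_sInf (s := {d | PHeightLEAdd p d a c}) (Nat.sub_lt h one_pos)
  simp only [PHeightLEAdd, not_forall] at this
  obtain ⟨j, hja, hjc⟩ := this
  refine ⟨j, Nat.pos_of_ne_zero ?_, hja, hjc⟩
  rintro rfl
  exact hjc ⟨c, one_smul ℕ c⟩

lemma divides_pow_heightExcess : Divides (p ^ heightExcess p a c) a := by
  rcases Nat.eq_zero_or_pos (heightExcess p a c) with h | h
  · rw [h, pow_zero]
    exact ⟨a, one_smul ℕ a⟩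
  obtain ⟨j, hj, hja, -⟩ := exists_divides_not_divides_of_heightExcess_pos h
  exact hja.pow_of_le (by omega)

lemma heightExcess_eq_zero_or : heightExcess p a c = 0 ∨ heightExcess p c a = 0 := by
  by_contra! h
  obtain ⟨j, hj, hja, hjc⟩ :=
    exists_divides_not_divides_of_heightExcess_pos (Nat.pos_of_ne_zero h.1)
  obtain ⟨k, hk, hkc, hka⟩ :=
    exists_divides_not_divides_of_heightExcess_pos (Nat.pos_of_ne_zero h.2)
  rcases le_total j k with hjk | hkj
  · exact hjc (hkc.pow_of_le (by omega))
  · exact hka (hja.pow_of_le (by omega))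

lemma divides_pow_add_heightExcess_of_pos (h : 0 < heightExcess p a c)
    (hc : Divides (p ^ j) c) : Divides (p ^ (j + heightExcess p a c)) a := by
  by_contra hja
  have : PHeightLEAdd p (heightExcess p a c - 1) a c := fun i hi => by
    rcases le_or_gt i j with hij | hji
    · exact hc.pow_of_le hij
    · exact absurd (hi.pow_of_le (by omega)) hja
  have := heightExcess_le this
  omega

/-- Both `h_p(a) - heightExcess p a c` and `h_p(c) - heightExcess p c a` equal
`min (h_p(a)) (h_p(c))`. -/
lemma divides_pow_heightExcess_add (h : PHeightLEAdd p d a c)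
    (ha : Divides (p ^ (heightExcess p a c + k)) a) :
    Divides (p ^ (heightExcess p c a + k)) c := by
  by_cases hca : heightExcess p c a = 0
  · rw [hca, zero_add]
    exact pHeightLEAdd_heightExcess h k (by rwa [add_comm] at ha)
  · rw [heightExcess_eq_zero_or.resolve_right hca, zero_add] at ha
    rw [add_comm]
    exact divides_pow_add_heightExcess_of_pos (Nat.pos_of_ne_zero hca) ha

end heightExcess

lemma Nat.exists_factorization_eq_of_le {n : ℕ} (f : ℕ → ℕ)
    (hf : ∀ p, p.Prime → f p ≤ n.factorization p) :
    ∃ D ≠ 0, ∀ p, p.Prime → D.factorization p = f p := by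
  have hne : ∀ q ∈ n.primeFactors, q ^ f q ≠ 0 :=
    fun q hq => pow_ne_zero _ (Nat.prime_of_mem_primeFactors hq).ne_zero
  refine ⟨∏ q ∈ n.primeFactors, q ^ f q, Finset.prod_ne_zero_iff.mpr hne, fun p hp => ?_⟩
  rw [Nat.factorization_prod hne, Finset.sum_apply',
    Finset.sum_congr rfl fun q hq => by rw [(Nat.prime_of_mem_primeFactors hq).factorization_pow]]
  simp only [Finsupp.single_apply, Finset.sum_ite_eq']
  split_ifs with hmem
  · rfl
  · have := hf p hp
    rw [Finsupp.notMem_support_iff.mp (by rwa [Nat.support_factorization])] at this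
    omega

lemma TypeLE.exists_nat {a c : G} (h : TypeLE a c) : ∃ n : ℕ, n ≠ 0 ∧ HeightLE a (n • c) := by
  obtain ⟨n, hn, h⟩ := h
  refine ⟨n.natAbs, Int.natAbs_ne_zero.mpr hn, fun p k hp hk => ?_⟩
  have := h p k hp hk
  rcases Int.natAbs_eq n with e | e <;> rw [e] at this
  · rwa [natCast_zsmul] at this
  · rwa [neg_smul, Divides.neg_iff, natCast_zsmul] at this

lemma heightLE_of_nsmul_eq (hTF : IsTorsionFreeGrp G) {a c u w : G} {D E : ℕ} (hE0 : E ≠ 0)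
    (hD : ∀ p, p.Prime → D.factorization p = heightExcess p a c)
    (hE : ∀ p, p.Prime → E.factorization p = heightExcess p c a)
    (hac : ∀ p, p.Prime → ∃ d, PHeightLEAdd p d a c) (hu : D • u = a) (hw : E • w = c) :
    HeightLE u w := by
  intro p k hp hk
  obtain ⟨d, hd⟩ := hac p hp
  have ha : Divides (p ^ (heightExcess p a c + k)) a := by
    rw [← hD p hp, ← hu, pow_add]
    exact (hk.mul_nsmul D).of_dvd (Nat.mul_dvd_mul_right (Nat.ordProj_dvd D p) _)
  have hc := divides_pow_heightExcess_add hd ha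
  rw [← hE p hp, ← hw] at hc
  exact Divides.of_pow_factorization_add_nsmul hTF hp hE0 hc

theorem exists_coprime_nsmul_heightEq (hTF : IsTorsionFreeGrp G) {a c : G} (hac : TypeEq a c) :
    ∃ (D E : ℕ) (u w : G), D.Coprime E ∧ D • u = a ∧ E • w = c ∧ HeightEq u w := by
  obtain ⟨n, hn0, hn⟩ := hac.1.exists_nat
  obtain ⟨m, hm0, hm⟩ := hac.2.exists_nat
  have hac : ∀ p, p.Prime → PHeightLEAdd p (n.factorization p) a c :=
    fun p hp => pHeightLEAdd_factorization_of_heightLE_nsmul hTF hp hn0 hn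
  have hca : ∀ p, p.Prime → PHeightLEAdd p (m.factorization p) c a :=
    fun p hp => pHeightLEAdd_factorization_of_heightLE_nsmul hTF hp hm0 hm
  obtain ⟨D, hD0, hD⟩ :=
    Nat.exists_factorization_eq_of_le (heightExcess · a c) fun p hp => heightExcess_le (hac p hp)
  obtain ⟨E, hE0, hE⟩ :=
    Nat.exists_factorization_eq_of_le (heightExcess · c a) fun p hp => heightExcess_le (hca p hp)
  obtain ⟨u, hu⟩ : Divides D a := Divides.of_forall_prime_pow hD0 fun p k hp hk =>
    divides_pow_heightExcess.pow_of_le (by rwa [← hD p hp, ← hp.pow_dvd_iff_le_factorization hD0])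
  obtain ⟨w, hw⟩ : Divides E c := Divides.of_forall_prime_pow hE0 fun p k hp hk =>
    divides_pow_heightExcess.pow_of_le (by rwa [← hE p hp, ← hp.pow_dvd_iff_le_factorization hE0])
  refine ⟨D, E, u, w, Nat.coprime_of_dvd fun p hp hpD hpE => ?_, hu, hw,
    heightLE_of_nsmul_eq hTF hE0 hD hE (fun p hp => ⟨_, hac p hp⟩) hu hw,
    heightLE_of_nsmul_eq hTF hD0 hE hD (fun p hp => ⟨_, hca p hp⟩) hw hu⟩
  rw [hp.dvd_iff_one_le_factorization hD0, hD p hp] at hpD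
  rw [hp.dvd_iff_one_le_factorization hE0, hE p hp] at hpE
  rcases heightExcess_eq_zero_or (p := p) (a := a) (c := c) with h | h <;> omega

def sl2AddEquiv (a b c d : ℤ) (h : a * d - b * c = 1) : G × G ≃+ G × G where
  toFun x := (a • x.1 + b • x.2, c • x.1 + d • x.2)
  invFun x := (d • x.1 - b • x.2, a • x.2 - c • x.1)
  left_inv x := by
    ext
    · linear_combination (norm := module) h • x.1
    · linear_combination (norm := module) h • x.2
  right_inv x := by
    ext
    · linear_combination (norm := module) h • x.1
    · linear_combination (norm := module) h • x.2
  map_add' x y := by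
    ext <;> simp only [Prod.fst_add, Prod.snd_add, smul_add] <;> abel

lemma exists_addEquiv_prod_snd_eq_zero (hTF : IsTorsionFreeGrp G) (hhom : Homogeneous G)
    (ht : TransitiveGrp G) (a c : G) : ∃ Φ : G × G ≃+ G × G, (Φ (a, c)).2 = 0 := by
  by_cases hc : c = 0
  · exact ⟨AddEquiv.refl _, hc⟩
  by_cases ha : a = 0
  · exact ⟨AddEquiv.prodComm, ha⟩
  obtain ⟨D, E, u, w, hDE, rfl, rfl, huw⟩ := exists_coprime_nsmul_heightEq hTF (hhom _ _ ha hc)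
  obtain ⟨α, hα⟩ := ht w u ⟨huw.2, huw.1⟩
  obtain ⟨r, s, hrs⟩ := Nat.isCoprime_iff_coprime.mpr hDE
  -- `(D • u, E • u) ↦ (u, 0)`
  refine ⟨((AddEquiv.refl G).prodCongr α).trans
    (sl2AddEquiv r s (-E) D (by linear_combination hrs)), ?_⟩
  change -(E : ℤ) • (D • u) + (D : ℤ) • α (E • w) = 0
  rw [map_nsmul, hα, ← natCast_zsmul, ← natCast_zsmul]
  module

namespace Finsupp

variable {I : Type*} {i j : I}

noncomputable def updatePair (i j : I) (f : G × G → G × G) (x : I →₀ G) : I →₀ G :=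
  (x.update i (f (x i, x j)).1).update j (f (x i, x j)).2

lemma updatePair_apply [DecidableEq I] (hij : i ≠ j) (f : G × G → G × G) (x : I →₀ G) (k : I) :
    updatePair i j f x k =
      if k = i then (f (x i, x j)).1 else if k = j then (f (x i, x j)).2 else x k := by
  simp only [updatePair, update_apply]
  split_ifs <;> simp_all

lemma updatePair_updatePair (hij : i ≠ j) (f g : G × G → G × G) (x : I →₀ G) :
    updatePair i j g (updatePair i j f x) = updatePair i j (g ∘ f) x := by
  classical
  ext k
  simp only [updatePair_apply hij, if_pos, if_neg hij, if_neg hij.symm, Function.comp_apply]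
  split_ifs <;> rfl

lemma updatePair_id (hij : i ≠ j) (x : I →₀ G) : updatePair i j id x = x := by
  classical
  ext k
  simp only [updatePair_apply hij, id]
  split_ifs <;> simp_all

noncomputable def pairAddEquiv (hij : i ≠ j) (Φ : G × G ≃+ G × G) : (I →₀ G) ≃+ (I →₀ G) where
  toFun := updatePair i j Φ
  invFun := updatePair i j Φ.symm
  left_inv x := by
    simp only [updatePair_updatePair hij, Function.comp_def, AddEquiv.symm_apply_apply]
    exact updatePair_id hij x
  right_inv x := by
    simp only [updatePair_updatePair hij, Function.comp_def, AddEquiv.apply_symm_apply]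
    exact updatePair_id hij x
  map_add' x y := by
    classical
    ext k
    simp only [updatePair_apply hij, add_apply, ← Prod.mk_add_mk, map_add, Prod.fst_add,
      Prod.snd_add]
    split_ifs <;> rfl

lemma pairAddEquiv_apply [DecidableEq I] (hij : i ≠ j) (Φ : G × G ≃+ G × G) (x : I →₀ G)
    (k : I) : pairAddEquiv hij Φ x k =
      if k = i then (Φ (x i, x j)).1 else if k = j then (Φ (x i, x j)).2 else x k :=
  updatePair_apply hij Φ x k

lemma exists_addEquiv_eq_single (hpair : ∀ a c : G, ∃ Φ : G × G ≃+ G × G, (Φ (a, c)).2 = 0)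
    (i₀ : I) (x : I →₀ G) : ∃ (η : (I →₀ G) ≃+ (I →₀ G)) (u : G), η x = single i₀ u := by
  classical
  suffices ∀ s : Finset I, ∀ x : I →₀ G, x.support.erase i₀ ⊆ s →
      ∃ (η : (I →₀ G) ≃+ (I →₀ G)) (u : G), η x = single i₀ u from this _ x subset_rfl
  intro s
  induction s using Finset.induction_on with
  | empty =>
    intro x hx
    refine ⟨AddEquiv.refl _, x i₀, support_subset_singleton.mp ?_⟩
    simpa using Finset.subset_insert_iff.mpr hx
  | insert j s _ ih =>
    intro x hx
    by_cases hj : j = i₀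
    · subst hj
      exact ih x ((Finset.subset_insert_iff_of_notMem (Finset.notMem_erase j _)).mp hx)
    obtain ⟨Φ, hΦ⟩ := hpair (x i₀) (x j)
    obtain ⟨η, u, hη⟩ := ih (pairAddEquiv (Ne.symm hj) Φ x) fun k hk => by
      obtain ⟨hki, hk⟩ := Finset.mem_erase.mp hk
      rw [mem_support_iff, pairAddEquiv_apply, if_neg hki] at hk
      split_ifs at hk with hkj
      · exact absurd hΦ hk
      · have := hx (Finset.mem_erase.mpr ⟨hki, mem_support_iff.mpr hk⟩)
        exact (Finset.mem_insert.mp this).resolve_left hkj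
    exact ⟨(pairAddEquiv (Ne.symm hj) Φ).trans η, u, hη⟩

end Finsupp

lemma heightEq_addEquiv_iff {A B : Type*} [AddCommGroup A] [AddCommGroup B] (e : G ≃+ A)
    (f : G ≃+ B) {x y : G} : HeightEq (e x) (f y) ↔ HeightEq x y := by
  simp only [HeightEq, HeightLE, Divides.addEquiv_iff]

lemma heightEq_single_iff {I : Type*} {i j : I} {x y : G} :
    HeightEq (Finsupp.single i x) (Finsupp.single j y) ↔ HeightEq x y := by
  simp only [HeightEq, HeightLE, Divides.single_iff]

end

theorem stmt_5 (G : Type*) [AddCommGroup G] (hTF : IsTorsionFreeGrp G)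
    (hhom : Homogeneous G) (ht : TransitiveGrp G)
    (I : Type*) [Nonempty I] : TransitiveGrp (I →₀ G) := by
  intro x y hxy
  have hpair := exists_addEquiv_prod_snd_eq_zero hTF hhom ht
  let i₀ := Classical.arbitrary I
  obtain ⟨η, u, hη⟩ := Finsupp.exists_addEquiv_eq_single hpair i₀ x
  obtain ⟨θ, v, hθ⟩ := Finsupp.exists_addEquiv_eq_single hpair i₀ y
  obtain ⟨β, hβ⟩ := ht u v <| by
    rwa [← heightEq_single_iff (i := i₀) (j := i₀), ← hη, ← hθ, heightEq_addEquiv_iff]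
  refine ⟨(η.trans (Finsupp.mapRange.addEquiv β)).trans θ.symm, ?_⟩
  rw [AddEquiv.trans_apply, AddEquiv.trans_apply, hη, Finsupp.mapRange.addEquiv_apply,
    Finsupp.mapRange_single, hβ, ← hθ, AddEquiv.symm_apply_apply]
end

section
/- Let A be a torsion-free abelian group and let I be an infinite index set. If the direct sum ⨁_{i∈I} A of copies of A is Krylov transitive, then ⨁_{i∈I} A is fully transitive; likewise, if the product ∏_{i∈I} A of copies of A is Krylov transitive, then ∏_{i∈I} A is fully transitive. -/
lemma divides_map {G H : Type*} [AddCommGroup G] [AddCommGroup H] (f : G →+ H)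
    {n : ℕ} {x : G} (h : Divides n x) : Divides n (f x) := by
  obtain ⟨z, hz⟩ := h
  exact ⟨f z, by rw [← map_nsmul, hz]⟩

lemma divides_equiv {G H : Type*} [AddCommGroup G] [AddCommGroup H] (e : G ≃+ H)
    {n : ℕ} {x : G} : Divides n (e x) ↔ Divides n x := by
  constructor
  · intro h
    have := divides_map e.symm.toAddMonoidHom h
    simpa using this
  · exact divides_map e.toAddMonoidHom

lemma key {G : Type*} [AddCommGroup G] (e : (G × G) ≃+ G)
    (hK : KrylovTransitive G) : FullyTransitive G := by
  intro x y hxy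
  have h1 : HeightEq (e (x, 0)) (e (x, y)) := by
    constructor <;> intro p k hp hd
    · rw [divides_equiv] at hd ⊢
      obtain ⟨z, hz⟩ := hd
      have h1 : p ^ k • z.1 = x := by simpa using congrArg Prod.fst hz
      obtain ⟨w, hw⟩ := hxy p k hp ⟨z.1, h1⟩
      exact ⟨(z.1, w), by simp [Prod.ext_iff, h1, hw]⟩
    · rw [divides_equiv] at hd ⊢
      obtain ⟨z, hz⟩ := hd
      have h1 : p ^ k • z.1 = x := by simpa using congrArg Prod.fst hz
      exact ⟨(z.1, 0), by simp [Prod.ext_iff, h1]⟩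
  obtain ⟨φ, hφ⟩ := hK _ _ h1
  refine ⟨(AddMonoidHom.snd G G).comp ((e.symm.toAddMonoidHom).comp
    (φ.comp ((e.toAddMonoidHom).comp (AddMonoidHom.inl G G)))), ?_⟩
  simp [hφ]

noncomputable def sumEquivSelf (I : Type*) [Infinite I] : (I ⊕ I) ≃ I := by
  have h : Cardinal.mk (I ⊕ I) = Cardinal.mk I := by
    simp [Cardinal.mk_sum, Cardinal.add_eq_self (Cardinal.aleph0_le_mk I)]
  exact (Cardinal.eq.mp h).some

noncomputable def piProdEquiv (I A : Type*) [Infinite I] [AddCommGroup A] :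
    ((I → A) × (I → A)) ≃+ (I → A) := by
  refine AddEquiv.mk' (((Equiv.sumArrowEquivProdArrow I I A).symm).trans
    ((sumEquivSelf I).arrowCongr (Equiv.refl A))) ?_
  intro f g
  funext i
  rcases h : (sumEquivSelf I).symm i with a | a <;>
    simp [Equiv.arrowCongr, Equiv.sumArrowEquivProdArrow, h]

theorem stmt_8 (A : Type*) [AddCommGroup A] (hTF : IsTorsionFreeGrp A)
    (I : Type*) [Infinite I] :
    (KrylovTransitive (I →₀ A) → FullyTransitive (I →₀ A)) ∧
    (KrylovTransitive (I → A) → FullyTransitive (I → A)) := by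
  constructor
  · exact key ((Finsupp.sumFinsuppAddEquivProdFinsupp.symm).trans
      (Finsupp.domCongr (sumEquivSelf I)))
  · exact key (piProdEquiv I A)
end

section
/- Let A be a torsion-free abelian group and let m be a natural number with m > 1. If the direct sum A^(m) of m copies of A (i.e., the group of functions Fin m → A) is Krylov transitive, then for every natural number n with 1 ≤ n < m the group A^(n) of functions Fin n → A is fully transitive; in particular, A itself is fully transitive. -/
section Aux

variable {A : Type*} [AddCommGroup A]

lemma divides_pi {k : ℕ} {d : ℕ} {f : Fin k → A} :
    Divides d f ↔ ∀ i, Divides d (f i) := by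
  constructor
  · rintro ⟨z, hz⟩ i
    exact ⟨z i, congrFun hz i⟩
  · intro hall
    choose z hz using hall
    exact ⟨z, funext hz⟩

/-- extension-by-zero hom. -/
def extHom (n m : ℕ) : (Fin n → A) →+ (Fin m → A) :=
  AddMonoidHom.mk' (fun f j => if hj : (j : ℕ) < n then f ⟨j, hj⟩ else 0)
    (by intro a b; funext j; by_cases hj : (j : ℕ) < n <;> simp [hj])

lemma extHom_apply (n m : ℕ) (f : Fin n → A) (j : Fin m) :
    extHom n m f j = if hj : (j : ℕ) < n then f ⟨j, hj⟩ else 0 := rfl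

lemma key_s9 {m : ℕ} (h : KrylovTransitive (Fin m → A)) {n : ℕ} (hnm : n < m)
    (x y : Fin n → A) (hxy : HeightLE x y) (i : Fin n) :
    ∃ φ : (Fin n → A) →+ A, φ x = y i := by
  set e : (Fin n → A) →+ (Fin m → A) := extHom n m with he
  set nn : Fin m := ⟨n, hnm⟩ with hnn
  set u : Fin m → A := e x with hu
  set v : Fin m → A := u + Pi.single nn (y i) with hv
  have hux : ∀ d : ℕ, Divides d u → Divides d x := by
    rintro d ⟨z, hz⟩
    refine ⟨fun j => z ⟨j, j.2.trans hnm⟩, funext fun j => ?_⟩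
    have := congrFun hz ⟨j, j.2.trans hnm⟩
    simpa [hu, he, extHom_apply, j.2] using this
  have hxu : ∀ d : ℕ, Divides d x → Divides d u := by
    rintro d ⟨z, hz⟩
    exact ⟨e z, by rw [← map_nsmul, hz]⟩
  have hvx : ∀ d : ℕ, Divides d v → Divides d x := by
    rintro d ⟨z, hz⟩
    refine ⟨fun j => z ⟨j, j.2.trans hnm⟩, funext fun j => ?_⟩
    have h1 := congrFun hz ⟨j, j.2.trans hnm⟩
    have hne : (⟨j, j.2.trans hnm⟩ : Fin m) ≠ nn := by
      simp [hnn, Fin.ext_iff]; omega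
    have h2 : v ⟨j, j.2.trans hnm⟩ = x j := by
      simp [hv, hu, he, extHom_apply, j.2, Pi.single_eq_of_ne hne]
    rw [h2] at h1
    exact h1
  have hxyiv : ∀ d : ℕ, Divides d x → Divides d (y i) → Divides d v := by
    rintro d ⟨zx, hzx⟩ ⟨zy, hzy⟩
    refine ⟨e zx + Pi.single nn zy, ?_⟩
    have : d • (Pi.single nn zy : Fin m → A) = Pi.single nn (d • zy) := by
      exact (map_nsmul (AddMonoidHom.single (fun _ : Fin m => A) nn) d zy).symm
    rw [smul_add, ← map_nsmul, hzx, this, hzy]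
  have heq : HeightEq u v := by
    constructor
    · intro p k hp hd
      have hdx := hux _ hd
      exact hxyiv _ hdx (divides_pi.mp (hxy p k hp hdx) i)
    · intro p k hp hd
      exact hxu _ (hvx _ hd)
  obtain ⟨ψ, hψ⟩ := h u v heq
  refine ⟨(Pi.evalAddMonoidHom (fun _ => A) nn).comp (ψ.comp e), ?_⟩
  have : ψ (e x) nn = v nn := by rw [← hu, hψ]
  simp only [AddMonoidHom.comp_apply, Pi.evalAddMonoidHom_apply, this]
  simp [hv, hu, he, extHom_apply, hnn, Pi.single_eq_same]

end Aux


theorem stmt_9 (A : Type*) [AddCommGroup A] (hTF : IsTorsionFreeGrp A)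
    (m : ℕ) (hm : 1 < m) (h : KrylovTransitive (Fin m → A)) :
    (∀ n : ℕ, 1 ≤ n → n < m → FullyTransitive (Fin n → A)) ∧ FullyTransitive A := by
  refine ⟨?_, ?_⟩
  · intro n _ hnm x y hxy
    choose φs hφs using fun i => key_s9 h hnm x y hxy i
    refine ⟨AddMonoidHom.mk' (fun f j => φs j f) (by intro a b; funext j; simp), ?_⟩
    funext j
    simp [hφs]
  · intro x y hxy
    have hxy' : HeightLE (fun _ : Fin 1 => x) (fun _ : Fin 1 => y) := by
      intro p k hp hd
      obtain ⟨z, hz⟩ := divides_pi.mp hd 0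
      obtain ⟨w, hw⟩ := hxy p k hp ⟨z, hz⟩
      exact ⟨fun _ => w, funext fun _ => hw⟩
    obtain ⟨φ, hφ⟩ := key_s9 h hm (fun _ : Fin 1 => x) (fun _ : Fin 1 => y) hxy' 0
    exact ⟨φ.comp (AddMonoidHom.mk' (fun a (_ : Fin 1) => a) (fun _ _ => rfl)), hφ⟩
end

section
/- Let I be a nonempty index set and let (R_i)_{i∈I} be a family of nontrivial additive subgroups of ℚ. If the product G = ∏_{i∈I} R_i is Krylov transitive, then G is fully transitive. -/
/-!
In a subgroup of `ℚ` any two elements `a, b` are integer multiples of a single element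
`c = s • a + t • b` (Bézout on numerators over a common denominator). Doing this coordinatewise
in `Π i, R i` gives, for any `x, y`, diagonal endomorphisms with `c = σ x + τ y`, `x = μ c` and
`y = ν c`. Then `χ(c) = χ(x)` as soon as `χ(x) ≤ χ(y)`, so Krylov transitivity sends `x` to `c`,
and `ν` carries `c` on to `y`.
-/

lemma Divides.map {G H : Type*} [AddCommGroup G] [AddCommGroup H] {n : ℕ} {x : G}
    (h : Divides n x) (φ : G →+ H) : Divides n (φ x) := by
  obtain ⟨z, rfl⟩ := h
  exact ⟨φ z, (map_nsmul φ n z).symm⟩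

lemma Divides.add {G : Type*} [AddCommGroup G] {n : ℕ} {a b : G}
    (ha : Divides n a) (hb : Divides n b) : Divides n (a + b) := by
  obtain ⟨za, rfl⟩ := ha
  obtain ⟨zb, rfl⟩ := hb
  exact ⟨za + zb, smul_add n za zb⟩

lemma HeightLE.of_map {G H : Type*} [AddCommGroup G] [AddCommGroup H] (φ : G →+ H) (x : G) :
    HeightLE x (φ x) :=
  fun _ _ _ hx => hx.map φ

lemma fullyTransitive_of_krylovTransitive {G : Type*} [AddCommGroup G]
    (hG : ∀ x y : G, ∃ σ τ μ ν : G →+ G, μ (σ x + τ y) = x ∧ ν (σ x + τ y) = y)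
    (h : KrylovTransitive G) : FullyTransitive G := by
  intro x y hxy
  obtain ⟨σ, τ, μ, ν, hμ, hν⟩ := hG x y
  have hxc : HeightEq x (σ x + τ y) :=
    ⟨fun p k hp hx => (hx.map σ).add ((hxy p k hp hx).map τ),
      by simpa only [hμ] using HeightLE.of_map μ (σ x + τ y)⟩
  obtain ⟨φ, hφ⟩ := h x _ hxc
  exact ⟨ν.comp φ, by rw [AddMonoidHom.comp_apply, hφ, hν]⟩

lemma Rat.exists_combination_zsmul_eq (a b : ℚ) :
    ∃ s t m n : ℤ, m • (s • a + t • b) = a ∧ n • (s • a + t • b) = b := by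
  have hα : ((a.num * b.den : ℤ) : ℚ) = a * (a.den * b.den) := by
    push_cast; rw [← Rat.mul_den_eq_num a]; ring
  have hβ : ((b.num * a.den : ℤ) : ℚ) = b * (a.den * b.den) := by
    push_cast; rw [← Rat.mul_den_eq_num b]; ring
  generalize a.num * b.den = α at hα
  generalize b.num * a.den = β at hβ
  obtain ⟨m, hm⟩ := Int.gcd_dvd_left α β
  obtain ⟨n, hn⟩ := Int.gcd_dvd_right α β
  have hg := Int.gcd_eq_gcd_ab α β
  generalize (α.gcd β : ℤ) = g at hm hn hg
  have hD : (a.den * b.den : ℚ) ≠ 0 := by positivity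
  -- the common divisor is `c = gcd(α, β) / (a.den * b.den)`
  refine ⟨Int.gcdA α β, Int.gcdB α β, m, n, ?_, ?_⟩ <;> simp only [zsmul_eq_mul] <;>
    apply mul_right_cancel₀ hD <;> qify at hm hn hg
  · linear_combination
      (1 - m * Int.gcdA α β : ℚ) * hα - (m * Int.gcdB α β : ℚ) * hβ - (m : ℚ) * hg - hm
  · linear_combination
      (1 - n * Int.gcdB α β : ℚ) * hβ - (n * Int.gcdA α β : ℚ) * hα - (n : ℚ) * hg - hn

lemma AddSubgroup.exists_combination_zsmul_eq (R : AddSubgroup ℚ) (a b : R) :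
    ∃ s t m n : ℤ, m • (s • a + t • b) = a ∧ n • (s • a + t • b) = b := by
  obtain ⟨s, t, m, n, hm, hn⟩ := Rat.exists_combination_zsmul_eq a b
  exact ⟨s, t, m, n, Subtype.ext (by simpa using hm), Subtype.ext (by simpa using hn)⟩

lemma exists_endomorphisms_pi_addSubgroup_rat {I : Type*} (R : I → AddSubgroup ℚ)
    (x y : Π i, R i) : ∃ σ τ μ ν : (Π i, R i) →+ Π i, R i,
      μ (σ x + τ y) = x ∧ ν (σ x + τ y) = y := by
  choose s t m n hm hn using fun i => (R i).exists_combination_zsmul_eq (x i) (y i)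
  let diagonal (k : I → ℤ) : (Π i, R i) →+ Π i, R i :=
    AddMonoidHom.pi fun i => k i • Pi.evalAddMonoidHom (fun i => R i) i
  exact ⟨diagonal s, diagonal t, diagonal m, diagonal n, funext hm, funext hn⟩

theorem stmt_11_general (I : Type*) (R : I → AddSubgroup ℚ)
    (h : KrylovTransitive (Π i, R i)) : FullyTransitive (Π i, R i) :=
  fullyTransitive_of_krylovTransitive (exists_endomorphisms_pi_addSubgroup_rat R) h

theorem stmt_11 (I : Type*) [Nonempty I] (R : I → AddSubgroup ℚ)
    (hnt : ∀ i, R i ≠ ⊥)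
    (h : KrylovTransitive (Π i, R i)) : FullyTransitive (Π i, R i) :=
  stmt_11_general I R h
end

section
/- Let A be a torsion-free abelian group. If the direct sum A × A of two copies of A is Krylov transitive, then A is fully transitive. -/
theorem stmt_13 (A : Type*) [AddCommGroup A] (hTF : IsTorsionFreeGrp A)
    (h : KrylovTransitive (A × A)) : FullyTransitive A := by
  intro x y hxy
  have heq : HeightEq ((x, 0) : A × A) ((x, y) : A × A) := by
    constructor
    · intro p k hp ⟨z, hz⟩
      obtain ⟨w, hw⟩ := hxy p k hp ⟨z.1, congrArg Prod.fst hz⟩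
      exact ⟨(z.1, w), by rw [Prod.smul_mk]; exact Prod.ext (by simpa using congrArg Prod.fst hz) hw⟩
    · intro p k hp ⟨z, hz⟩
      exact ⟨(z.1, 0), by rw [Prod.smul_mk]; exact Prod.ext (by simpa using congrArg Prod.fst hz) (smul_zero _)⟩
  obtain ⟨φ, hφ⟩ := h (x, 0) (x, y) heq
  refine ⟨(AddMonoidHom.snd A A).comp (φ.comp (AddMonoidHom.inl A A)), ?_⟩
  simpa using congrArg Prod.snd hφ
end

section
/- There exists a torsion-free abelian group G that is both transitive and fully transitive, but whose square G × G is not Krylov transitive. -/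
/-!
The group `G ≤ ℚ²` is cut out by local conditions: at a prime `p` it may contain, besides
`ℤ_(p)²`, the `ℤ_(p)`-multiples of `v_p / p`, where `p ↦ v_p` runs through every integer vector
infinitely often. A vector `x ∈ G` is divisible by all large primes `p` with `v_p ∥ x`, whereas
a vector independent of `x` is divisible by none of them; so `χ(x) ≤ χ(y)` puts `y` on the line
`ℚ x`, and comparing `p`-heights along that line gives `y ∈ ℤ x`. Thus `n • id` and `± id`
witness full transitivity and transitivity.

In `G × G`, the elements `(e₁, e₂)` and `(w, e₂)` with `q • w = (1, 1)`, `v_q = (1, 1)`, are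
divisible by no prime, since `p ∣ a, b` forces `‖a ∧ b‖_p ≤ p⁻¹`. An endomorphism `φ` with
`φ (e₁, e₂) = (w, e₂)` splits `w` as `π₁ φ (e₁, 0) + π₁ φ (0, e₂)`, and the two summands lie
on the axes because they are divisible by all `p` with `v_p = (1, 0)`, resp. `(0, 1)`.
Hence `(1/q, 0) ∈ G`, contradicting the local condition at `q`.
-/

section Divisibility

variable {A B : Type*} [AddCommGroup A] [AddCommGroup B]

lemma divides_pow_zero (p : ℕ) (a : A) : Divides (p ^ 0) a := ⟨a, by simp⟩

lemma Divides.of_pow_succ {p k : ℕ} {a : A} (h : Divides (p ^ (k + 1)) a) :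
    Divides p a := by
  obtain ⟨z, hz⟩ := h
  exact ⟨p ^ k • z, by rw [smul_smul, ← pow_succ', hz]⟩

lemma Divides.map_s14 {n : ℕ} {a : A} (h : Divides n a) (f : A →+ B) : Divides n (f a) := by
  obtain ⟨z, rfl⟩ := h
  exact ⟨f z, (map_nsmul f n z).symm⟩

lemma heightLE_of_forall_not_divides {a : A} (ha : ∀ p : ℕ, p.Prime → ¬ Divides p a) (b : B) :
    HeightLE a b := by
  rintro p (_ | k) hp hd
  · exact divides_pow_zero p b
  · exact absurd hd.of_pow_succ (ha p hp)

lemma heightEq_of_forall_not_divides {a : A} {b : B} (ha : ∀ p : ℕ, p.Prime → ¬ Divides p a)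
    (hb : ∀ p : ℕ, p.Prime → ¬ Divides p b) : HeightEq a b :=
  ⟨heightLE_of_forall_not_divides ha b, heightLE_of_forall_not_divides hb a⟩

end Divisibility

section Wedge

def wedge {R : Type*} [CommRing R] (x y : R × R) : R := x.1 * y.2 - x.2 * y.1

lemma wedge_smul_smul {R : Type*} [CommRing R] (a b : R) (x y : R × R) :
    wedge (a • x) (b • y) = a * b * wedge x y := by
  simp only [wedge, Prod.smul_fst, Prod.smul_snd, smul_eq_mul]
  ring

lemma exists_eq_smul_of_wedge_eq_zero {K : Type*} [Field K] {x y : K × K} (hx : x ≠ 0)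
    (h : wedge x y = 0) : ∃ s : K, y = s • x := by
  simp only [wedge] at h
  by_cases h1 : x.1 = 0
  · have h2 : x.2 ≠ 0 := fun h2 => hx (Prod.ext h1 h2)
    refine ⟨y.2 / x.2, Prod.ext ?_ ?_⟩
    · simp only [h1, zero_mul, zero_sub, neg_eq_zero, mul_eq_zero, h2, false_or] at h
      simp [h, h1]
    · simp [h2]
  · refine ⟨y.1 / x.1, Prod.ext ?_ ?_⟩
    · simp [h1]
    · simp only [Prod.smul_snd, smul_eq_mul]
      field_simp
      linear_combination h

end Wedge

namespace KrylovCounterexample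

open Filter IsAbsoluteValue

/-- `ℤ_(p)`. -/
def integersAt (p : ℕ) [Fact p.Prime] : Subring ℚ where
  carrier := {q | padicNorm p q ≤ 1}
  mul_mem' {a b} ha hb := by
    change padicNorm p (a * b) ≤ 1
    rw [padicNorm.mul]
    exact mul_le_one₀ ha (padicNorm.nonneg b) hb
  one_mem' := (padicNorm.one (p := p)).le
  add_mem' ha hb := padicNorm.nonarchimedean.trans (max_le ha hb)
  zero_mem' := by simp
  neg_mem' {a} ha := (padicNorm.neg a).trans_le ha

section IntegersAt

variable {p : ℕ} [Fact p.Prime]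

lemma mem_integersAt {q : ℚ} : q ∈ integersAt p ↔ padicNorm p q ≤ 1 := Iff.rfl

lemma padicNorm_inv_pow (k : ℕ) : padicNorm p ((p : ℚ) ^ k)⁻¹ = (p : ℚ) ^ k := by
  rw [abv_inv (padicNorm p), abv_pow (padicNorm p), padicNorm.padicNorm_p_of_prime, inv_pow,
    inv_inv]

lemma inv_pow_mem_integersAt {ℓ : ℕ} [Fact ℓ.Prime] (h : ℓ ≠ p) (k : ℕ) :
    ((p : ℚ) ^ k)⁻¹ ∈ integersAt ℓ := by
  rw [mem_integersAt, abv_inv (padicNorm ℓ), abv_pow (padicNorm ℓ),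
    padicNorm.padicNorm_of_prime_of_ne h, one_pow, inv_one]

lemma inv_mul_mem_integersAt_of_dvd_den {s : ℚ} (h : p ∣ s.den) :
    ((p : ℚ) * s)⁻¹ ∈ integersAt p := by
  have hp : p.Prime := Fact.out
  have hnum : padicNorm p s.num = 1 := by
    rw [padicNorm.int_eq_one_iff, Int.natCast_dvd]
    exact fun hn => hp.one_lt.ne' (Nat.eq_one_of_dvd_coprimes s.reduced hn h)
  obtain ⟨m, hm⟩ := h
  have hden : padicNorm p s.den ≤ (p : ℚ)⁻¹ := by
    rw [hm, Nat.cast_mul, padicNorm.mul, padicNorm.padicNorm_p_of_prime]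
    exact mul_le_of_le_one_right (by positivity) (padicNorm.of_nat m)
  have hp0 : (0 : ℚ) < p := by exact_mod_cast hp.pos
  rw [mem_integersAt, abv_inv (padicNorm p), padicNorm.mul, padicNorm.padicNorm_p_of_prime,
    ← Rat.num_div_den s, padicNorm.div, hnum, mul_one_div, inv_div, div_inv_eq_mul]
  calc padicNorm p s.den * p ≤ (p : ℚ)⁻¹ * p := by gcongr
    _ = 1 := inv_mul_cancel₀ hp0.ne'

end IntegersAt

lemma eventually_padicNorm_eq_one {q : ℚ} (hq : q ≠ 0) :
    ∀ᶠ p in atTop, p.Prime → padicNorm p q = 1 := by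
  filter_upwards [eventually_gt_atTop q.num.natAbs, eventually_gt_atTop q.den]
    with p hnum hden hp
  have := Fact.mk hp
  have hnum' : ¬ (p : ℤ) ∣ q.num := fun h =>
    (Nat.le_of_dvd (Int.natAbs_pos.2 (Rat.num_ne_zero.2 hq)) (Int.natCast_dvd.1 h)).not_gt hnum
  have hden' : ¬ p ∣ q.den := fun h => (Nat.le_of_dvd q.den_pos h).not_gt hden
  rw [← Rat.num_div_den q, padicNorm.div, (padicNorm.int_eq_one_iff _).2 hnum',
    (padicNorm.nat_eq_one_iff _).2 hden', div_one]

def castVec (u : ℤ × ℤ) : ℚ × ℚ := (u.1, u.2)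

def integerPointsAt (p : ℕ) [Fact p.Prime] : Subring (ℚ × ℚ) :=
  (integersAt p).prod (integersAt p)

/-- `ℤ_(p)² + ℤ_(p) • (v / p)`. -/
def localLattice (p : ℕ) [Fact p.Prime] (v : ℤ × ℤ) : AddSubgroup (ℚ × ℚ) where
  carrier := {x | ∃ c ∈ integersAt p, x - (c / p) • castVec v ∈ integerPointsAt p}
  add_mem' := by
    rintro x y ⟨c, hc, hx⟩ ⟨d, hd, hy⟩
    refine ⟨c + d, add_mem hc hd, ?_⟩
    convert add_mem hx hy using 1
    rw [add_div, add_smul]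
    abel
  zero_mem' := ⟨0, zero_mem _, by simp⟩
  neg_mem' := by
    rintro x ⟨c, hc, hx⟩
    refine ⟨-c, neg_mem hc, ?_⟩
    convert neg_mem hx using 1
    rw [neg_div, neg_smul, neg_sub, sub_neg_eq_add]
    abel

section LocalLattice

variable {p : ℕ} [Fact p.Prime] {v : ℤ × ℤ} {x y : ℚ × ℚ}

lemma castVec_mem_integerPointsAt (u : ℤ × ℤ) : castVec u ∈ integerPointsAt p :=
  Subring.mem_prod.2 ⟨intCast_mem _ _, intCast_mem _ _⟩

lemma smul_mem_integerPointsAt {r : ℚ} (hr : r ∈ integersAt p) (hx : x ∈ integerPointsAt p) :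
    r • x ∈ integerPointsAt p := by
  obtain ⟨h1, h2⟩ := Subring.mem_prod.1 hx
  exact Subring.mem_prod.2 ⟨mul_mem hr h1, mul_mem hr h2⟩

lemma wedge_mem_integersAt (hx : x ∈ integerPointsAt p) (hy : y ∈ integerPointsAt p) :
    wedge x y ∈ integersAt p := by
  obtain ⟨hx1, hx2⟩ := Subring.mem_prod.1 hx
  obtain ⟨hy1, hy2⟩ := Subring.mem_prod.1 hy
  exact sub_mem (mul_mem hx1 hy2) (mul_mem hx2 hy1)

lemma castVec_mem_localLattice (u : ℤ × ℤ) : castVec u ∈ localLattice p v :=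
  ⟨0, zero_mem _, by simpa using castVec_mem_integerPointsAt u⟩

lemma smul_mem_localLattice (hx : x ∈ localLattice p v) {r : ℚ} (hr : r ∈ integersAt p) :
    r • x ∈ localLattice p v := by
  obtain ⟨c, hc, hx⟩ := hx
  refine ⟨r * c, mul_mem hr hc, ?_⟩
  convert smul_mem_integerPointsAt hr hx using 1
  rw [smul_sub, smul_smul, mul_div_assoc]

lemma wedge_castVec_mem_integersAt (hx : x ∈ localLattice p v) :
    wedge (castVec v) x ∈ integersAt p := by
  obtain ⟨c, -, hx⟩ := hx
  convert wedge_mem_integersAt (castVec_mem_integerPointsAt v) hx using 1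
  simp only [wedge, Prod.fst_sub, Prod.snd_sub, Prod.smul_fst, Prod.smul_snd, smul_eq_mul]
  ring

lemma mul_wedge_mem_integersAt (hx : x ∈ localLattice p v) (hy : y ∈ localLattice p v) :
    (p : ℚ) * wedge x y ∈ integersAt p := by
  obtain ⟨c, hc, hx⟩ := hx
  obtain ⟨d, hd, hy⟩ := hy
  set a := x - (c / p) • castVec v
  set b := y - (d / p) • castVec v
  have hp : (p : ℚ) ≠ 0 := by exact_mod_cast (Fact.out : p.Prime).ne_zero
  have key : (p : ℚ) * wedge x y =
      p * wedge a b + d * wedge a (castVec v) + c * wedge (castVec v) b := by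
    simp only [a, b, wedge, Prod.fst_sub, Prod.snd_sub, Prod.smul_fst, Prod.smul_snd, smul_eq_mul]
    field_simp
    ring
  have hv := castVec_mem_integerPointsAt (p := p) v
  rw [key]
  exact add_mem (add_mem (mul_mem (natCast_mem _ p) (wedge_mem_integersAt hx hy))
    (mul_mem hd (wedge_mem_integersAt hx hv))) (mul_mem hc (wedge_mem_integersAt hv hy))

end LocalLattice

/-- `v_p`: writing `count Nat.Prime p = pair i j`, it is the `i`-th vector of `ℤ²`, so every
vector occurs at infinitely many primes. -/
def vec (p : ℕ) : ℤ × ℤ :=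
  Denumerable.ofNat (ℤ × ℤ) (Nat.unpair (Nat.count Nat.Prime p)).1

lemma frequently_vec_eq (u : ℤ × ℤ) : ∃ᶠ p in atTop, p.Prime ∧ vec p = u := by
  have hinf : (Set.ofPred Nat.Prime).Infinite := Nat.infinite_setOfPred_prime
  refine Nat.frequently_atTop_iff_infinite.2 (Set.infinite_of_injective_forall_mem
    (f := fun j => Nat.nth Nat.Prime (Nat.pair (Encodable.encode u) j)) ?_ fun j => ?_)
  · intro i j hij
    exact (Nat.pair_eq_pair.1 (Nat.nth_injective hinf hij)).2
  · refine ⟨Nat.nth_mem_of_infinite hinf _, ?_⟩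
    simp only [vec, Nat.count_nth_of_infinite hinf, Nat.unpair_pair, Denumerable.ofNat_encode]

def G : AddSubgroup (ℚ × ℚ) :=
  ⨅ (p : ℕ) (_ : Fact p.Prime), localLattice p (vec p)

lemma mem_G {x : ℚ × ℚ} :
    x ∈ G ↔ ∀ (p : ℕ) [Fact p.Prime], x ∈ localLattice p (vec p) := by
  simp only [G, AddSubgroup.mem_iInf]

def intPoint (u : ℤ × ℤ) : G :=
  ⟨castVec u, mem_G.2 fun _ _ => castVec_mem_localLattice u⟩

lemma coe_intPoint (u : ℤ × ℤ) : (intPoint u : ℚ × ℚ) = castVec u := rfl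

lemma divides_iff_inv_smul_mem_G {n : ℕ} (hn : n ≠ 0) {x : G} :
    Divides n x ↔ (n : ℚ)⁻¹ • (x : ℚ × ℚ) ∈ G := by
  have hn' : (n : ℚ) ≠ 0 := Nat.cast_ne_zero.2 hn
  constructor
  · rintro ⟨z, rfl⟩
    simp [← Nat.cast_smul_eq_nsmul ℚ, smul_smul, hn']
  · intro h
    refine ⟨⟨_, h⟩, Subtype.ext ?_⟩
    simp [← Nat.cast_smul_eq_nsmul ℚ, smul_smul, hn']

section Divides

variable {p : ℕ} [Fact p.Prime]

lemma divides_pow_iff {x : G} {k : ℕ} :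
    Divides (p ^ k) x ↔ ((p : ℚ) ^ k)⁻¹ • (x : ℚ × ℚ) ∈ localLattice p (vec p) := by
  rw [divides_iff_inv_smul_mem_G (pow_ne_zero _ (Fact.out : p.Prime).ne_zero), mem_G,
    Nat.cast_pow]
  refine ⟨fun h => h p, fun h ℓ _ => ?_⟩
  by_cases hℓ : ℓ = p
  · subst hℓ
    exact h
  · exact smul_mem_localLattice (mem_G.1 x.2 ℓ) (inv_pow_mem_integersAt hℓ k)

lemma divides_iff_inv_smul_mem {x : G} :
    Divides p x ↔ (p : ℚ)⁻¹ • (x : ℚ × ℚ) ∈ localLattice p (vec p) := by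
  simpa using divides_pow_iff (p := p) (x := x) (k := 1)

lemma divides_of_eq_smul_castVec {x : G} {c : ℚ} (hx : (x : ℚ × ℚ) = c • castVec (vec p))
    (hc : c ∈ integersAt p) : Divides p x := by
  refine divides_iff_inv_smul_mem.2 ⟨c, hc, ?_⟩
  rw [hx, smul_smul, inv_mul_eq_div, sub_self]
  exact zero_mem _

lemma padicNorm_wedge_mul_pow_le {x y : G} {k l : ℕ} (hx : Divides (p ^ k) x)
    (hy : Divides (p ^ l) y) : padicNorm p (wedge x y) * (p : ℚ) ^ (k + l) ≤ p := by
  have h := mul_wedge_mem_integersAt (divides_pow_iff.1 hx) (divides_pow_iff.1 hy)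
  rw [wedge_smul_smul, mem_integersAt, padicNorm.mul, padicNorm.mul, padicNorm.mul,
    padicNorm_inv_pow, padicNorm_inv_pow, padicNorm.padicNorm_p_of_prime,
    inv_mul_le_iff₀ (by exact_mod_cast (Fact.out : p.Prime).pos)] at h
  rw [pow_add]
  linarith

end Divides

lemma exists_not_divides_pow (p : ℕ) [Fact p.Prime] {x : G} (hx : x ≠ 0) :
    ∃ k, ¬ Divides (p ^ k) x := by
  obtain ⟨u, hu⟩ : ∃ u : ℤ × ℤ, wedge (x : ℚ × ℚ) (castVec u) ≠ 0 := by
    by_cases h1 : (x : ℚ × ℚ).1 = 0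
    · refine ⟨(1, 0), ?_⟩
      have h2 : (x : ℚ × ℚ).2 ≠ 0 := fun h2 => hx (Subtype.ext (Prod.ext h1 h2))
      simpa [wedge, castVec] using h2
    · exact ⟨(0, 1), by simpa [wedge, castVec] using h1⟩
  have hpos : 0 < padicNorm p (wedge x (castVec u)) :=
    (padicNorm.nonneg _).lt_of_ne (padicNorm.nonzero hu).symm
  obtain ⟨k, hk⟩ := pow_unbounded_of_one_lt (p / padicNorm p (wedge x (castVec u)))
    (by exact_mod_cast (Fact.out : p.Prime).one_lt : (1 : ℚ) < p)
  refine ⟨k, fun hd => ?_⟩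
  have := padicNorm_wedge_mul_pow_le hd (divides_pow_zero p (intPoint u))
  rw [div_lt_iff₀ hpos, add_zero, coe_intPoint] at *
  linarith

lemma wedge_castVec_eq_zero_of_frequently_divides {u : ℤ × ℤ} {y : G}
    (h : ∃ᶠ p in atTop, p.Prime ∧ vec p = u ∧ Divides p y) : wedge (castVec u) y = 0 := by
  by_contra hne
  obtain ⟨p, ⟨hp, rfl, hy⟩, hnorm⟩ :=
    (h.and_eventually (eventually_padicNorm_eq_one hne)).exists
  have := Fact.mk hp
  have h := wedge_castVec_mem_integersAt (divides_iff_inv_smul_mem.1 hy)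
  rw [← one_smul ℚ (castVec (vec p)), wedge_smul_smul, mem_integersAt, padicNorm.mul,
    padicNorm.mul, hnorm hp, abv_inv (padicNorm p), padicNorm.padicNorm_p_of_prime] at h
  have : (1 : ℚ) < p := by exact_mod_cast hp.one_lt
  simp only [padicNorm.one, inv_inv, one_mul, mul_one] at h
  linarith

lemma wedge_eq_zero_of_heightLE {x y : G} (h : HeightLE x y) : wedge (x : ℚ × ℚ) y = 0 := by
  set X : ℚ × ℚ := (x : ℚ × ℚ)
  set d : ℚ := X.1.den * X.2.den
  have hd : d ≠ 0 := by positivity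
  -- `x` is divisible by every large prime `p` with `v_p = u`, an integer multiple of `x`.
  set u : ℤ × ℤ := (X.1.num * X.2.den, X.2.num * X.1.den)
  have hu : castVec u = d • X := by
    ext <;> simp only [castVec, u, d, Prod.smul_fst, Prod.smul_snd, smul_eq_mul, Int.cast_mul,
      Int.cast_natCast, ← Rat.mul_den_eq_num] <;> ring
  have hdiv : ∃ᶠ p in atTop, p.Prime ∧ vec p = u ∧ Divides p y := by
    refine ((frequently_vec_eq u).and_eventually (eventually_padicNorm_eq_one hd)).mono ?_
    rintro p ⟨⟨hp, hvp⟩, hnorm⟩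
    have := Fact.mk hp
    have hx : Divides p x := by
      refine divides_of_eq_smul_castVec (c := d⁻¹) ?_ ?_
      · rw [hvp, hu, smul_smul, inv_mul_cancel₀ hd, one_smul]
      · rw [mem_integersAt, abv_inv (padicNorm p), hnorm hp, inv_one]
    exact ⟨hp, hvp, by simpa using h p 1 hp (by simpa using hx)⟩
  have := wedge_castVec_eq_zero_of_frequently_divides hdiv
  rw [hu, ← one_smul ℚ (y : ℚ × ℚ), wedge_smul_smul, mul_one] at this
  exact (mul_eq_zero.1 this).resolve_left hd

lemma den_eq_one_of_heightLE {x y : G} (hx : x ≠ 0) {s : ℚ} (hs : (y : ℚ × ℚ) = s • x)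
    (h : HeightLE x y) : s.den = 1 := by
  by_contra hden
  obtain ⟨p, hp, hps⟩ := Nat.exists_prime_and_dvd hden
  have := Fact.mk hp
  have hs0 : s ≠ 0 := fun hs0 => hden (by simp [hs0])
  have hp0 : (p : ℚ) ≠ 0 := by exact_mod_cast hp.ne_zero
  -- `‖s‖_p ≥ p`, so `p ^ k ∣ s • x` gives `p ^ (k + 1) ∣ x`: the `p`-height of `x` is infinite.
  have hall : ∀ k, Divides (p ^ k) x := by
    intro k
    induction k with
    | zero => exact divides_pow_zero p x
    | succ k ih =>
      have hy := smul_mem_localLattice (divides_pow_iff.1 (h p k hp ih))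
        (inv_mul_mem_integersAt_of_dvd_den hps)
      rw [hs, smul_smul, smul_smul] at hy
      rw [divides_pow_iff]
      convert hy using 2
      field_simp
      ring
  obtain ⟨k, hk⟩ := exists_not_divides_pow p hx
  exact hk (hall k)

lemma exists_eq_zsmul_of_heightLE {x y : G} (h : HeightLE x y) : ∃ n : ℤ, y = n • x := by
  by_cases hx : x = 0
  · refine ⟨0, ?_⟩
    by_contra hy
    obtain ⟨k, hk⟩ := exists_not_divides_pow 2 (x := y) (by simpa [hx] using hy)
    exact hk (h 2 k Nat.prime_two (hx ▸ ⟨0, smul_zero _⟩))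
  · obtain ⟨s, hs⟩ := exists_eq_smul_of_wedge_eq_zero (by simpa using hx)
      (wedge_eq_zero_of_heightLE h)
    refine ⟨s.num, Subtype.ext ?_⟩
    rw [AddSubgroup.coe_zsmul, ← Int.cast_smul_eq_zsmul ℚ,
      Rat.coe_int_num_of_den_eq_one (den_eq_one_of_heightLE hx hs h), hs]

theorem isTorsionFreeGrp_G : IsTorsionFreeGrp G :=
  fun _ _ hn h => (smul_eq_zero.1 h).resolve_left hn

theorem fullyTransitive_G : FullyTransitive G := fun x y h => by
  obtain ⟨n, rfl⟩ := exists_eq_zsmul_of_heightLE h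
  exact ⟨n • AddMonoidHom.id G, rfl⟩

theorem transitiveGrp_G : TransitiveGrp G := by
  rintro x y ⟨hxy, hyx⟩
  obtain ⟨n, rfl⟩ := exists_eq_zsmul_of_heightLE hxy
  obtain ⟨m, hm⟩ := exists_eq_zsmul_of_heightLE hyx
  by_cases hx : x = 0
  · exact ⟨AddEquiv.refl G, by simp [hx]⟩
  have hmn : m * n = 1 := by
    have : (m * n - 1) • x = 0 := by rw [sub_smul, mul_smul, ← hm, one_smul, sub_self]
    exact sub_eq_zero.1 ((smul_eq_zero.1 this).resolve_right hx)
  rcases Int.eq_one_or_neg_one_of_mul_eq_one' hmn with ⟨-, rfl⟩ | ⟨-, rfl⟩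
  · exact ⟨AddEquiv.refl G, by simp⟩
  · exact ⟨AddEquiv.neg G, by simp⟩

lemma not_divides_prod_of_mul_wedge_eq_one {a b : G} {m : ℤ}
    (hm : m * wedge (a : ℚ × ℚ) b = 1) (p : ℕ) (hp : p.Prime) : ¬ Divides p (a, b) := by
  intro hd
  have := Fact.mk hp
  have h := padicNorm_wedge_mul_pow_le (k := 1) (l := 1)
    (by simpa using hd.map_s14 (AddMonoidHom.fst G G)) (by simpa using hd.map_s14 (AddMonoidHom.snd G G))
  have hnorm : 1 ≤ padicNorm p (wedge (a : ℚ × ℚ) b) := by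
    have h1 := congrArg (padicNorm p) hm
    rw [padicNorm.mul, padicNorm.one] at h1
    nlinarith [padicNorm.of_int (p := p) m, padicNorm.nonneg (p := p) (wedge (a : ℚ × ℚ) b)]
  have hp1 : (1 : ℚ) < p := by exact_mod_cast hp.one_lt
  have : (p : ℚ) ^ 2 ≤ p := (le_mul_of_one_le_left (by positivity) hnorm).trans h
  nlinarith

lemma divides_intPoint {p : ℕ} [Fact p.Prime] {u : ℤ × ℤ} (hv : vec p = u) :
    Divides p (intPoint u) :=
  divides_of_eq_smul_castVec (c := 1) (by rw [one_smul, hv, coe_intPoint]) (one_mem _)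

lemma wedge_castVec_apply_intPoint (f : G →+ G) (u : ℤ × ℤ) :
    wedge (castVec u) (f (intPoint u)) = 0 :=
  wedge_castVec_eq_zero_of_frequently_divides ((frequently_vec_eq u).mono
    fun _ ⟨hp, hv⟩ => ⟨hp, hv, have := Fact.mk hp; (divides_intPoint hv).map_s14 f⟩)

lemma padicNorm_fst_le_one {q : ℕ} [Fact q.Prime] (hq : vec q = (1, 1)) {a : G}
    (ha : (a : ℚ × ℚ).2 = 0) : padicNorm q (a : ℚ × ℚ).1 ≤ 1 := by
  have h := wedge_castVec_mem_integersAt (mem_G.1 a.2 q)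
  rw [hq, mem_integersAt] at h
  simpa [wedge, castVec, ha, padicNorm.neg] using h

theorem not_krylovTransitive_G_prod : ¬ KrylovTransitive (G × G) := by
  obtain ⟨q, hq, hvq⟩ := (frequently_vec_eq (1, 1)).exists
  have := Fact.mk hq
  obtain ⟨w, hw⟩ := divides_intPoint hvq
  have hw₁ : (q : ℚ) * (w : ℚ × ℚ).1 = 1 := by
    simpa [← Nat.cast_smul_eq_nsmul ℚ, coe_intPoint, castVec] using congrArg (·.1.1) hw
  intro hK
  obtain ⟨φ, hφ⟩ := hK (intPoint (1, 0), intPoint (0, 1)) (w, intPoint (0, 1))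
    (heightEq_of_forall_not_divides
      (not_divides_prod_of_mul_wedge_eq_one (m := 1) (by simp [coe_intPoint, castVec, wedge]))
      (not_divides_prod_of_mul_wedge_eq_one (m := q) (by simpa [coe_intPoint, castVec, wedge])))
  set a := (AddMonoidHom.fst G G).comp (φ.comp (AddMonoidHom.inl G G)) (intPoint (1, 0))
  set b := (AddMonoidHom.fst G G).comp (φ.comp (AddMonoidHom.inr G G)) (intPoint (0, 1))
  have ha₂ : (a : ℚ × ℚ).2 = 0 := by
    simpa [wedge, castVec] using wedge_castVec_apply_intPoint _ (1, 0)
  have hb₁ : (b : ℚ × ℚ).1 = 0 := by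
    simpa [wedge, castVec] using wedge_castVec_apply_intPoint _ (0, 1)
  have hab : a + b = w := by
    simp only [a, b, AddMonoidHom.comp_apply, AddMonoidHom.inl_apply, AddMonoidHom.inr_apply,
      AddMonoidHom.coe_fst, ← Prod.fst_add, ← map_add, Prod.mk_add_mk, add_zero, zero_add, hφ]
  have ha₁ : (a : ℚ × ℚ).1 = (w : ℚ × ℚ).1 := by
    simpa [hb₁] using congrArg (fun z : G => (z : ℚ × ℚ).1) hab
  have hle := padicNorm_fst_le_one hvq ha₂
  have hq₁ := congrArg (padicNorm q) hw₁
  rw [padicNorm.mul, padicNorm.padicNorm_p_of_prime, padicNorm.one, ← ha₁,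
    inv_mul_eq_one₀ (by exact_mod_cast hq.ne_zero)] at hq₁
  have : (1 : ℚ) < q := by exact_mod_cast hq.one_lt
  linarith

end KrylovCounterexample

theorem stmt_14 : ∃ (G : Type) (_ : AddCommGroup G),
    IsTorsionFreeGrp G ∧ TransitiveGrp G ∧ FullyTransitive G ∧
      ¬ KrylovTransitive (G × G) :=
  ⟨KrylovCounterexample.G, inferInstance, KrylovCounterexample.isTorsionFreeGrp_G,
    KrylovCounterexample.transitiveGrp_G, KrylovCounterexample.fullyTransitive_G,
    KrylovCounterexample.not_krylovTransitive_G_prod⟩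
end

section
/- Let H be an additive subgroup of ℚ such that 1 ∈ H, 1 ∉ 5H, every additive group endomorphism of H is multiplication by some integer, and every additive homomorphism from H to ℤ is zero. Then the group G = ℤ × H is neither Krylov transitive nor weakly transitive. -/
theorem stmt_19 (H : AddSubgroup ℚ) (h1 : (1 : ℚ) ∈ H)
    (h5 : ∀ x : ℚ, x ∈ H → 5 * x ≠ 1)
    (hend : ∀ f : H →+ H, ∃ n : ℤ, ∀ x : H, f x = n • x)
    (hhom : ∀ f : H →+ ℤ, f = 0) :
    ¬ KrylovTransitive (ℤ × H) ∧ ¬ WeaklyTransitive (ℤ × H) := by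
  set e : H := ⟨1, h1⟩ with he
  -- structure of endomorphisms of ℤ × H
  have aux : ∀ f : ℤ × H →+ ℤ × H, ∃ a d : ℤ, ∃ h : H,
      ∀ (m : ℤ) (x : H), f (m, x) = (a * m, m • h + d • x) := by
    intro f
    have hb : ∀ x : H, (f (0, x)).1 = 0 := by
      have h0 := hhom ((AddMonoidHom.fst ℤ H).comp (f.comp (AddMonoidHom.inr ℤ H)))
      intro x
      have := congrArg (fun g => g x) h0
      simpa using this
    obtain ⟨d, hd⟩ := hend ((AddMonoidHom.snd ℤ H).comp (f.comp (AddMonoidHom.inr ℤ H)))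
    refine ⟨(f (1, 0)).1, d, (f (1, 0)).2, ?_⟩
    intro m x
    have hsplit : ((m, x) : ℤ × H) = m • ((1 : ℤ), (0 : H)) + ((0 : ℤ), x) := by
      ext <;> simp
    rw [hsplit, map_add, map_zsmul]
    have hfx : f (0, x) = (0, d • x) := by
      have h2 : (f (0, x)).2 = d • x := hd x
      have h1' : (f (0, x)).1 = 0 := hb x
      ext <;> simp [h1', h2]
    rw [hfx]
    ext
    · simp [mul_comm]
    · simp
  -- the key elements have trivial height
  have key5 : ∀ p k : ℕ, p.Prime → Divides (p ^ k) (((5 : ℤ), e) : ℤ × H) → k = 0 := by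
    intro p k hp ⟨⟨m, z⟩, hz⟩
    have h1' : (p ^ k : ℤ) * m = 5 := by
      have := congrArg Prod.fst hz
      simpa [nsmul_eq_mul] using this
    have h2' : (p ^ k : ℕ) • z = e := congrArg Prod.snd hz
    have hdvd : (p ^ k : ℕ) ∣ 5 := by
      have : (p ^ k : ℤ) ∣ 5 := ⟨m, h1'.symm⟩
      exact_mod_cast this
    have h5p : Nat.Prime 5 := by norm_num
    rcases h5p.eq_one_or_self_of_dvd _ hdvd with hq | hq
    · by_contra hk
      exact absurd hq (Nat.one_lt_pow hk hp.one_lt).ne'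
    · exfalso
      rw [hq] at h2'
      have hc : (5 : ℚ) * (z : ℚ) = 1 := by
        have := congrArg (Subtype.val) h2'
        simpa [he, nsmul_eq_mul] using this
      exact h5 z z.2 hc
  have key1 : ∀ p k : ℕ, p.Prime → Divides (p ^ k) (((1 : ℤ), (0 : H)) : ℤ × H) → k = 0 := by
    intro p k hp ⟨⟨m, z⟩, hz⟩
    have h1' : (p ^ k : ℤ) * m = 1 := by
      have := congrArg Prod.fst hz
      simpa [nsmul_eq_mul] using this
    have hdvd : (p ^ k : ℕ) ∣ 1 := by
      have : (p ^ k : ℤ) ∣ 1 := ⟨m, h1'.symm⟩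
      exact_mod_cast this
    have hq := Nat.eq_one_of_dvd_one hdvd
    by_contra hk
    exact absurd hq (Nat.one_lt_pow hk hp.one_lt).ne'
  constructor
  · -- not Krylov transitive
    intro hKT
    have hEq : HeightEq (((5 : ℤ), e) : ℤ × H) (((1 : ℤ), (0 : H)) : ℤ × H) := by
      constructor
      · intro p k hp hd
        have hk := key5 p k hp hd
        subst hk
        exact ⟨((1 : ℤ), (0 : H)), by simp⟩
      · intro p k hp hd
        have hk := key1 p k hp hd
        subst hk
        exact ⟨((5 : ℤ), e), by simp⟩
    obtain ⟨f, hf⟩ := hKT _ _ hEq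
    obtain ⟨a, d, h, hfa⟩ := aux f
    have := hfa 5 e
    rw [hf] at this
    have h1' : (1 : ℤ) = a * 5 := congrArg Prod.fst this
    omega
  · -- not weakly transitive
    intro hWT
    -- φ (m, x) = (m, 2 x)
    let φ : ℤ × H →+ ℤ × H :=
      { toFun := fun p => (p.1, (2 : ℤ) • p.2)
        map_zero' := by simp
        map_add' := by intro p q; ext <;> simp [smul_add] }
    -- ψ (m, x) = (m, -m • e + 3 x)
    let ψ : ℤ × H →+ ℤ × H :=
      { toFun := fun p => (p.1, (-p.1) • e + (3 : ℤ) • p.2)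
        map_zero' := by simp
        map_add' := by
          intro p q; ext
          · simp
          · simp [add_smul, smul_add, neg_add]; abel }
    have hφ : φ (((5 : ℤ), e) : ℤ × H) = ((5 : ℤ), (2 : ℤ) • e) := rfl
    have hψ : ψ (((5 : ℤ), (2 : ℤ) • e) : ℤ × H) = ((5 : ℤ), e) := by
      have : (-(5 : ℤ)) • e + (3 : ℤ) • ((2 : ℤ) • e) = e := by
        rw [smul_smul, ← add_smul]
        norm_num
      ext
      · rfl
      · simpa [ψ] using congrArg (Subtype.val) this
    obtain ⟨η, hη⟩ := hWT _ _ φ ψ hφ hψ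
    obtain ⟨a, d, h, hfa⟩ := aux η.toAddMonoidHom
    obtain ⟨a', d', h', hfa'⟩ := aux η.symm.toAddMonoidHom
    -- d * d' = 1
    have hdd : d' * d = 1 := by
      have h0 : η.symm (η ((0 : ℤ), e)) = ((0 : ℤ), e) := η.symm_apply_apply _
      have h1'' : η ((0 : ℤ), e) = ((0 : ℤ), d • e) := by
        have := hfa 0 e
        simpa using this
      rw [h1''] at h0
      have h2'' : η.symm ((0 : ℤ), d • e) = ((0 : ℤ), (d' * d) • e) := by
        have := hfa' 0 (d • e)
        simpa [smul_smul] using this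
      rw [h2''] at h0
      have h3 : ((d' * d) • e : H) = e := congrArg Prod.snd h0
      have h4 : ((d' * d : ℤ) : ℚ) * 1 = 1 := by
        have := congrArg (Subtype.val) h3
        push_cast at this
        simpa [he] using this
      have : ((d' * d : ℤ) : ℚ) = 1 := by linarith
      exact_mod_cast this
    have hd1 : d = 1 ∨ d = -1 := by
      rcases Int.mul_eq_one_iff_eq_one_or_neg_one.mp hdd with ⟨_, h⟩ | ⟨_, h⟩
      · exact Or.inl h
      · exact Or.inr h
    -- from η (5, e) = (5, 2e)
    have hmain := hfa 5 e
    have hη' : η.toAddMonoidHom ((5 : ℤ), e) = ((5 : ℤ), (2 : ℤ) • e) := hη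
    rw [hη'] at hmain
    have hsnd : (5 : ℤ) • h + d • e = (2 : ℤ) • e := (congrArg Prod.snd hmain).symm
    have hQ : 5 * (h : ℚ) + (d : ℚ) = 2 := by
      have := congrArg (Subtype.val) hsnd
      push_cast at this
      simpa [he] using this
    rcases hd1 with hd | hd
    · subst hd
      exact h5 (h : ℚ) h.2 (by push_cast at hQ; linarith)
    · subst hd
      have hw : ((((2 : ℤ) • h - e : ↥H)) : ℚ) = 2 * (h : ℚ) - 1 := by
        push_cast
        simp [he]
      refine h5 _ ((2 : ℤ) • h - e : ↥H).2 ?_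
      rw [hw]
      push_cast at hQ
      linarith
end
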